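/- Let G be a group with elements a_1, ..., a_{g-1}, u_1, ..., u_{g-1} satisfying the braid relations within each family, a_i u_j = u_j a_i for |i-j|>1, a_i u_{i+1} u_i = u_{i+1} u_i a_{i+1}, a_{i+1} u_i u_{i+1} = u_i u_{i+1} a_i, a_1 u_1 a_1 = u_1, u_2 a_1 a_2 u_1 = a_1 a_2, (u_{g-1} ⋯ u_1)(u_1 ⋯ u_{g-1}) = 1, (u_1 ⋯ u_{g-1})^g = 1, and a_1 (a_2 ⋯ a_{g-1} u_{g-1} ⋯ u_2) a_1 = a_2 ⋯ a_{g-1} u_{g-1} ⋯ u_2. Then (a_1 ⋯ a_{g-1})² = (u_{g-1} ⋯ u_1)^{-2} = (u_1 ⋯ u_{g-1})². -/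

import Mathlib

/-!
Write `n = g - 1`, `A = a₁⋯aₙ`, `U = u₁⋯uₙ` and `V = uₙ⋯u₁`, so that `V = U⁻¹` by (B4a) and
`Vⁿ = U` by (B3). Conjugation by `U` raises the index of every generator by one, which spreads
(C4) and (C5) to all indices. The heart of the argument is `A V A = Vⁿ`, by induction on the
number of generators: in the inductive step, conjugation by `a₁⋯aₖ` turns `uₖ₊₁aₖ₊₁⁻¹` into
`uₖ₊₁⋯u₂ · u₁a₁⁻¹ · u₂⋯uₖ₊₁`, and in the braid group `(uₖ₊₁⋯u₁)ᵏ = (u₂⋯uₖ₊₁)(uₖ⋯u₁)ᵏ`.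
Relation (D) together with (C4) makes `AV` commute with `a₁`, and the index shifts make it commute
with the other `aᵢ`; hence `A` commutes with `V`, and `A² = V⁻¹(AVA) = V⁻¹Vⁿ = U²`.
-/

variable {G : Type*} [Group G]

/-- `prodAsc f m = f 1 * f 2 * ⋯ * f m` (empty product for `m = 0`). -/
def prodAsc (f : ℕ → G) (m : ℕ) : G :=
  ((List.range m).map (fun i => f (i + 1))).prod

/-- `prodDesc f m = f m * ⋯ * f 2 * f 1` (empty product for `m = 0`). -/
def prodDesc (f : ℕ → G) (m : ℕ) : G :=
  (((List.range m).reverse).map (fun i => f (i + 1))).prod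

/-- The fundamental braid element: `Δ 0 = Δ 1 = 1`, `Δ (m+1) = (u 1 ⋯ u m) * Δ m`. -/
def braidDelta (u : ℕ → G) : ℕ → G
  | 0 => 1
  | m + 1 => prodAsc u m * braidDelta u m

@[simp] lemma prodAsc_zero (f : ℕ → G) : prodAsc f 0 = 1 := rfl

lemma prodAsc_succ (f : ℕ → G) (m : ℕ) : prodAsc f (m + 1) = prodAsc f m * f (m + 1) := by
  simp [prodAsc, List.range_succ]

lemma prodAsc_succ' (f : ℕ → G) (m : ℕ) :
    prodAsc f (m + 1) = f 1 * prodAsc (fun i => f (i + 1)) m := by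
  simp [prodAsc, List.range_succ_eq_map, Function.comp_def]

@[simp] lemma prodDesc_zero (f : ℕ → G) : prodDesc f 0 = 1 := rfl

lemma prodDesc_succ (f : ℕ → G) (m : ℕ) : prodDesc f (m + 1) = f (m + 1) * prodDesc f m := by
  simp [prodDesc, List.range_succ]

lemma prodDesc_succ' (f : ℕ → G) (m : ℕ) :
    prodDesc f (m + 1) = prodDesc (fun i => f (i + 1)) m * f 1 := by
  simp [prodDesc, List.range_succ_eq_map, ← List.map_reverse, Function.comp_def]

lemma prodAsc_mul_eq_mul_prodAsc {f h : ℕ → G} {x : G} {m : ℕ}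
    (hx : ∀ i, 1 ≤ i → i ≤ m → f i * x = x * h i) :
    prodAsc f m * x = x * prodAsc h m := by
  induction m with
  | zero => simp
  | succ m ih =>
    rw [prodAsc_succ, prodAsc_succ, mul_assoc, hx (m + 1) (by omega) le_rfl, ← mul_assoc,
      ih fun i h1 h2 => hx i h1 (by omega), mul_assoc]

lemma Commute.prodAsc_left {f : ℕ → G} {x : G} {m : ℕ}
    (hx : ∀ i, 1 ≤ i → i ≤ m → Commute (f i) x) : Commute (prodAsc f m) x :=
  prodAsc_mul_eq_mul_prodAsc hx

lemma Commute.prodDesc_left {f : ℕ → G} {x : G} {m : ℕ}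
    (hx : ∀ i, 1 ≤ i → i ≤ m → Commute (f i) x) : Commute (prodDesc f m) x := by
  induction m with
  | zero => simp
  | succ m ih =>
    rw [prodDesc_succ]
    exact (hx (m + 1) (by omega) le_rfl).mul_left (ih fun i h1 h2 => hx i h1 (by omega))

lemma mul_pow_eq_pow_mul_of_shift {f : ℕ → G} {x : G} {K : ℕ}
    (hx : ∀ i, 1 ≤ i → i + 1 ≤ K → f i * x = x * f (i + 1)) :
    ∀ j i, 1 ≤ i → i + j ≤ K → f i * x ^ j = x ^ j * f (i + j) := by
  intro j
  induction j with
  | zero => simp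
  | succ j ih =>
    intro i h1 h2
    rw [pow_succ', ← mul_assoc, hx i h1 (by omega), mul_assoc, ih (i + 1) (by omega) (by omega),
      ← mul_assoc, ← pow_succ', Nat.add_right_comm, add_assoc]

def FarCommute (n : ℕ) (f g : ℕ → G) : Prop :=
  ∀ i j, 1 ≤ i → i ≤ n → 1 ≤ j → j ≤ n → (i + 2 ≤ j ∨ j + 2 ≤ i) →
    Commute (f i) (g j)

lemma FarCommute.self_of_lt {n : ℕ} {f : ℕ → G}
    (hf : ∀ i j, 1 ≤ i → i + 2 ≤ j → j ≤ n → f i * f j = f j * f i) :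
    FarCommute n f f := by
  rintro i j hi hin hj hjn (hij | hji)
  · exact hf i j hi hij hjn
  · exact (hf j i hj hji (by omega)).symm

section Shift

variable {n : ℕ} {f g : ℕ → G}

lemma prodAsc_mul_shift (hfg : FarCommute n f g)
    (hbraid : ∀ i, 1 ≤ i → i + 1 ≤ n → g i * g (i + 1) * f i = f (i + 1) * g i * g (i + 1))
    {m i : ℕ} (hi : 1 ≤ i) (him : i + 1 ≤ m) (hm : m ≤ n) :
    prodAsc g m * f i = f (i + 1) * prodAsc g m := by
  induction m with
  | zero => omega
  | succ m ih =>
    rcases Nat.lt_or_ge (i + 1) (m + 1) with h | h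
    · rw [prodAsc_succ, mul_assoc, ← (hfg i (m + 1) hi (by omega) (by omega) hm (by omega)).eq,
        ← mul_assoc, ih (by omega) (by omega), mul_assoc]
    · obtain rfl : m = i := by omega
      obtain ⟨j, rfl⟩ : ∃ j, m = j + 1 := ⟨m - 1, by omega⟩
      have hc : Commute (prodAsc g j) (f (j + 2)) := Commute.prodAsc_left fun t ht1 ht2 =>
        (hfg (j + 2) t (by omega) hm ht1 (by omega) (by omega)).symm
      show prodAsc g (j + 2) * f (j + 1) = f (j + 2) * prodAsc g (j + 2)
      calc prodAsc g (j + 2) * f (j + 1)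
          = prodAsc g j * (g (j + 1) * g (j + 2) * f (j + 1)) := by
            rw [prodAsc_succ, prodAsc_succ]; group
        _ = prodAsc g j * f (j + 2) * (g (j + 1) * g (j + 2)) := by
            rw [hbraid (j + 1) hi hm]; group
        _ = f (j + 2) * prodAsc g (j + 2) := by rw [hc.eq, prodAsc_succ, prodAsc_succ]; group

lemma mul_prodDesc_shift (hfg : FarCommute n f g)
    (hbraid : ∀ i, 1 ≤ i → i + 1 ≤ n → f i * g (i + 1) * g i = g (i + 1) * g i * f (i + 1))
    {m i : ℕ} (hi : 1 ≤ i) (him : i + 1 ≤ m) (hm : m ≤ n) :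
    f i * prodDesc g m = prodDesc g m * f (i + 1) := by
  induction m with
  | zero => omega
  | succ m ih =>
    rcases Nat.lt_or_ge (i + 1) (m + 1) with h | h
    · rw [prodDesc_succ, ← mul_assoc, (hfg i (m + 1) hi (by omega) (by omega) hm (by omega)).eq,
        mul_assoc, ih (by omega) (by omega), mul_assoc]
    · obtain rfl : m = i := by omega
      obtain ⟨j, rfl⟩ : ∃ j, m = j + 1 := ⟨m - 1, by omega⟩
      have hc : Commute (prodDesc g j) (f (j + 2)) := Commute.prodDesc_left fun t ht1 ht2 =>
        (hfg (j + 2) t (by omega) hm ht1 (by omega) (by omega)).symm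
      show f (j + 1) * prodDesc g (j + 2) = prodDesc g (j + 2) * f (j + 2)
      calc f (j + 1) * prodDesc g (j + 2)
          = f (j + 1) * g (j + 2) * g (j + 1) * prodDesc g j := by
            rw [prodDesc_succ, prodDesc_succ]; group
        _ = g (j + 2) * g (j + 1) * (prodDesc g j * f (j + 2)) := by
            have hb : f (j + 1) * g (j + 2) * g (j + 1) = g (j + 2) * g (j + 1) * f (j + 2) :=
              hbraid (j + 1) hi hm
            rw [hb, hc.eq]; group
        _ = prodDesc g (j + 2) * f (j + 2) := by rw [prodDesc_succ, prodDesc_succ]; group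

end Shift

lemma prodDesc_succ_pow {n : ℕ} {u : ℕ → G} (hcomm : FarCommute n u u)
    (hbraid : ∀ i, 1 ≤ i → i + 1 ≤ n → u i * u (i + 1) * u i = u (i + 1) * u i * u (i + 1))
    {k : ℕ} (hk : k + 1 ≤ n) : ∀ m j, j + m = k + 1 →
    prodDesc u (k + 1) ^ m = prodAsc (fun i => u (i + j)) m * prodDesc u k ^ m := by
  intro m
  induction m with
  | zero => simp
  | succ m ih =>
    intro j hjm
    have hshift : prodAsc (fun i => u (i + j)) m * prodDesc u (k + 1) =
        prodDesc u (k + 1) * prodAsc (fun i => u (i + (j + 1))) m :=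
      prodAsc_mul_eq_mul_prodAsc fun i h1 h2 =>
        mul_prodDesc_shift hcomm hbraid (by omega) (by omega) hk
    calc prodDesc u (k + 1) ^ (m + 1)
        = prodDesc u (k + 1) * prodAsc (fun i => u (i + (j + 1))) m * prodDesc u k ^ m := by
          rw [pow_succ', ih (j + 1) (by omega), mul_assoc]
      _ = prodAsc (fun i => u (i + j)) m * u (m + 1 + j) * prodDesc u k ^ (m + 1) := by
          rw [← hshift, prodDesc_succ, pow_succ', show m + 1 + j = k + 1 by omega]; group
      _ = prodAsc (fun i => u (i + j)) (m + 1) * prodDesc u k ^ (m + 1) := by rw [prodAsc_succ]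

-- (B1), (B2), (C1)–(C5) among the generators of index at most `n`, with the sides of (C3) swapped.
structure Relations (n : ℕ) (a u : ℕ → G) : Prop where
  comm_u : FarCommute n u u
  braid_u : ∀ i, 1 ≤ i → i + 1 ≤ n → u i * u (i + 1) * u i = u (i + 1) * u i * u (i + 1)
  comm_au : FarCommute n a u
  c2 : ∀ i, 1 ≤ i → i + 1 ≤ n → a i * u (i + 1) * u i = u (i + 1) * u i * a (i + 1)
  c3 : ∀ i, 1 ≤ i → i + 1 ≤ n → u i * u (i + 1) * a i = a (i + 1) * u i * u (i + 1)
  c4 : a 1 * u 1 * a 1 = u 1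
  c5 : u 2 * a 1 * a 2 * u 1 = a 1 * a 2

namespace Relations

variable {n : ℕ} {a u : ℕ → G}

lemma conj_prodAsc_a (h : Relations n a u) {i : ℕ} (hi : 1 ≤ i) (hin : i + 1 ≤ n) :
    MulAut.conj (prodAsc u n) (a i) = a (i + 1) := by
  rw [MulAut.conj_apply, prodAsc_mul_shift h.comm_au h.c3 hi hin le_rfl, mul_inv_cancel_right]

lemma conj_prodAsc_u (h : Relations n a u) {i : ℕ} (hi : 1 ≤ i) (hin : i + 1 ≤ n) :
    MulAut.conj (prodAsc u n) (u i) = u (i + 1) := by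
  rw [MulAut.conj_apply, prodAsc_mul_shift h.comm_u h.braid_u hi hin le_rfl,
    mul_inv_cancel_right]

lemma a_mul_prodDesc (h : Relations n a u) {m i : ℕ} (hi : 1 ≤ i) (him : i + 1 ≤ m)
    (hm : m ≤ n) :
    a i * prodDesc u m = prodDesc u m * a (i + 1) :=
  mul_prodDesc_shift h.comm_au h.c2 hi him hm

lemma a_mul_u_mul_a (h : Relations n a u) {i : ℕ} (hi : 1 ≤ i) (hin : i ≤ n) :
    a i * u i * a i = u i := by
  induction i, hi using Nat.le_induction with
  | base => exact h.c4
  | succ i hi ih =>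
    have := congrArg (MulAut.conj (prodAsc u n)) (ih (by omega))
    rwa [map_mul, map_mul, h.conj_prodAsc_a hi hin, h.conj_prodAsc_u hi hin] at this

lemma a_mul_u_mul_inv_mul_inv (h : Relations n a u) {i : ℕ} (hi : 1 ≤ i) (hin : i + 1 ≤ n) :
    a i * (u (i + 1) * (a (i + 1))⁻¹) * (a i)⁻¹ = u (i + 1) * (u i * (a i)⁻¹) * u (i + 1) := by
  induction i, hi using Nat.le_induction with
  | base =>
    calc a 1 * (u 2 * (a 2)⁻¹) * (a 1)⁻¹
        = a 1 * u 2 * u 1 * ((u 1)⁻¹ * (a 2)⁻¹ * (a 1)⁻¹) := by group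
      _ = u 2 * u 1 * (a 1)⁻¹ * (a 1 * a 2) * (u 1)⁻¹ * (a 2)⁻¹ * (a 1)⁻¹ := by
          rw [h.c2 1 le_rfl hin]; group
      _ = u 2 * (u 1 * (a 1)⁻¹) * u 2 := by rw [← h.c5]; group
  | succ i hi ih =>
    have := congrArg (MulAut.conj (prodAsc u n)) (ih (by omega))
    simp only [map_mul, map_inv] at this
    rwa [h.conj_prodAsc_a hi (by omega), h.conj_prodAsc_a (by omega) hin,
      h.conj_prodAsc_u hi (by omega), h.conj_prodAsc_u (by omega) hin] at this

lemma prodAsc_conj_u_mul_a_inv (h : Relations n a u) {k : ℕ} (hk : k + 1 ≤ n) :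
    prodAsc a k * (u (k + 1) * (a (k + 1))⁻¹) * (prodAsc a k)⁻¹ =
      prodDesc (fun i => u (i + 1)) k * (u 1 * (a 1)⁻¹) * prodAsc (fun i => u (i + 1)) k := by
  induction k with
  | zero => simp
  | succ k ih =>
    have hc : Commute (prodAsc a k) (u (k + 2)) := Commute.prodAsc_left fun i h1 h2 =>
      h.comm_au i (k + 2) h1 (by omega) (by omega) hk (by omega)
    calc prodAsc a (k + 1) * (u (k + 2) * (a (k + 2))⁻¹) * (prodAsc a (k + 1))⁻¹
        = prodAsc a k * (a (k + 1) * (u (k + 2) * (a (k + 2))⁻¹) * (a (k + 1))⁻¹) *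
            (prodAsc a k)⁻¹ := by rw [prodAsc_succ]; group
      _ = prodAsc a k * u (k + 2) * (u (k + 1) * (a (k + 1))⁻¹) *
            (u (k + 2) * (prodAsc a k)⁻¹) := by
          rw [h.a_mul_u_mul_inv_mul_inv (by omega) hk]; group
      _ = u (k + 2) * (prodAsc a k * (u (k + 1) * (a (k + 1))⁻¹) * (prodAsc a k)⁻¹) *
            u (k + 2) := by rw [hc.eq, ← hc.inv_left.eq]; group
      _ = _ := by rw [ih (by omega), prodDesc_succ, prodAsc_succ]; group

lemma prodAsc_mul_prodDesc_mul_prodAsc (h : Relations n a u) {k : ℕ} (hk : k ≤ n) :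
    prodAsc a k * prodDesc u k * prodAsc a k = prodDesc u k ^ k := by
  induction k with
  | zero => simp
  | succ k ih =>
    have hVA : prodDesc u k * prodAsc a k = (prodAsc a k)⁻¹ * prodDesc u k ^ k :=
      eq_inv_mul_of_mul_eq (by rw [← mul_assoc, ih (by omega)])
    have hau : a (k + 1) * u (k + 1) = u (k + 1) * (a (k + 1))⁻¹ :=
      eq_mul_inv_of_mul_eq (h.a_mul_u_mul_a (by omega) hk)
    have hpow : a 1 * prodDesc u (k + 1) ^ k = prodDesc u (k + 1) ^ k * a (k + 1) := by
      rw [mul_pow_eq_pow_mul_of_shift (f := a) (fun i h1 h2 => h.a_mul_prodDesc h1 h2 hk) k 1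
        le_rfl (by omega), Nat.add_comm]
    calc prodAsc a (k + 1) * prodDesc u (k + 1) * prodAsc a (k + 1)
        = prodAsc a k * (a (k + 1) * u (k + 1)) * (prodDesc u k * prodAsc a k) * a (k + 1) := by
          rw [prodAsc_succ, prodDesc_succ]; group
      _ = prodAsc a k * (u (k + 1) * (a (k + 1))⁻¹) * (prodAsc a k)⁻¹ *
            (prodDesc u k ^ k * a (k + 1)) := by rw [hau, hVA]; group
      _ = prodDesc (fun i => u (i + 1)) k * u 1 * (a 1)⁻¹ *
            (prodAsc (fun i => u (i + 1)) k * prodDesc u k ^ k) * a (k + 1) := by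
          rw [h.prodAsc_conj_u_mul_a_inv hk]; group
      _ = prodDesc u (k + 1) * (a 1)⁻¹ * (a 1 * prodDesc u (k + 1) ^ k) := by
          rw [← prodDesc_succ_pow h.comm_u h.braid_u hk k 1 (by omega), ← prodDesc_succ', hpow]
          group
      _ = prodDesc u (k + 1) ^ (k + 1) := by rw [pow_succ']; group

end Relations

lemma commute_prodAsc_prodDesc {n : ℕ} {a u : ℕ → G} (ha : FarCommute n a a)
    (ha' : ∀ i, 1 ≤ i → i + 1 ≤ n → a i * a (i + 1) * a i = a (i + 1) * a i * a (i + 1))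
    (hau : FarCommute n a u)
    (hc2 : ∀ i, 1 ≤ i → i + 1 ≤ n → a i * u (i + 1) * u i = u (i + 1) * u i * a (i + 1))
    (hc4 : a 1 * u 1 * a 1 = u 1)
    (hD : a 1 * (prodAsc (fun i => a (i + 1)) (n - 1) * prodDesc (fun i => u (i + 1)) (n - 1))
      * a 1 = prodAsc (fun i => a (i + 1)) (n - 1) * prodDesc (fun i => u (i + 1)) (n - 1)) :
    Commute (prodAsc a n) (prodDesc u n) := by
  have key : ∀ i, 1 ≤ i → i ≤ n → Commute (a i) (prodAsc a n * prodDesc u n) := by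
    intro i hi hin
    obtain rfl | hi := eq_or_lt_of_le hi
    · obtain ⟨m, rfl⟩ : ∃ m, n = m + 1 := ⟨n - 1, by omega⟩
      have hAV : prodAsc a (m + 1) * prodDesc u (m + 1) =
          a 1 * (prodAsc (fun i => a (i + 1)) m * prodDesc (fun i => u (i + 1)) m) * u 1 := by
        rw [prodAsc_succ', prodDesc_succ']; group
      have hua : u 1 * a 1 = (a 1)⁻¹ * u 1 := eq_inv_mul_of_mul_eq (by rw [← mul_assoc, hc4])
      rw [Nat.add_sub_cancel] at hD
      rw [Commute, SemiconjBy, hAV]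
      generalize prodAsc (fun i => a (i + 1)) m * prodDesc (fun i => u (i + 1)) m = W at hD ⊢
      calc a 1 * (a 1 * W * u 1) = a 1 * (W * (a 1)⁻¹) * u 1 := by
            rw [← eq_mul_inv_of_mul_eq hD]; group
        _ = a 1 * W * u 1 * a 1 := by rw [mul_assoc (a 1 * W), hua]; group
    · obtain ⟨j, rfl⟩ : ∃ j, i = j + 1 := ⟨i - 1, by omega⟩
      calc a (j + 1) * (prodAsc a n * prodDesc u n)
          = prodAsc a n * (a j * prodDesc u n) := by
            rw [← mul_assoc, ← prodAsc_mul_shift ha ha' (by omega) hin le_rfl, mul_assoc]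
        _ = prodAsc a n * prodDesc u n * a (j + 1) := by
            rw [mul_prodDesc_shift hau hc2 (by omega) hin le_rfl, mul_assoc]
  simpa using (Commute.refl (prodAsc a n)).inv_right.mul_right (Commute.prodAsc_left key)

/-- relation (E5): (a_1 ⋯ a_{g-1})² = (u_{g-1} ⋯ u_1)⁻² = (u_1 ⋯ u_{g-1})². -/
theorem rel_E5 (g : ℕ) (a u : ℕ → G)
    (ha1 : ∀ i j, 1 ≤ i → i + 2 ≤ j → j ≤ g - 1 → a i * a j = a j * a i)
    (ha2 : ∀ i, 1 ≤ i → i + 1 ≤ g - 1 → a i * a (i + 1) * a i = a (i + 1) * a i * a (i + 1))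
    (hu1 : ∀ i j, 1 ≤ i → i + 2 ≤ j → j ≤ g - 1 → u i * u j = u j * u i)
    (hu2 : ∀ i, 1 ≤ i → i + 1 ≤ g - 1 → u i * u (i + 1) * u i = u (i + 1) * u i * u (i + 1))
    (hC1 : ∀ i j, 1 ≤ i → i ≤ g - 1 → 1 ≤ j → j ≤ g - 1 → (i + 2 ≤ j ∨ j + 2 ≤ i) →
      a i * u j = u j * a i)
    (hC2 : ∀ i, 1 ≤ i → i ≤ g - 2 → a i * u (i + 1) * u i = u (i + 1) * u i * a (i + 1))
    (hC3 : ∀ i, 1 ≤ i → i ≤ g - 2 → a (i + 1) * u i * u (i + 1) = u i * u (i + 1) * a i)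
    (hC4 : a 1 * u 1 * a 1 = u 1)
    (hC5 : u 2 * a 1 * a 2 * u 1 = a 1 * a 2)
(hB4a : prodDesc u (g - 1) * prodAsc u (g - 1) = 1)
    (hB3 : (prodAsc u (g - 1)) ^ g = 1)
    (hD : a 1 * (((List.range (g - 2)).map (fun i => a (i + 2))).prod *
            (((List.range (g - 2)).reverse).map (fun i => u (i + 2))).prod) * a 1 =
          ((List.range (g - 2)).map (fun i => a (i + 2))).prod *
            (((List.range (g - 2)).reverse).map (fun i => u (i + 2))).prod)
    :
    (prodAsc a (g - 1)) ^ 2 = ((prodDesc u (g - 1)) ^ 2)⁻¹ ∧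
      (prodAsc a (g - 1)) ^ 2 = (prodAsc u (g - 1)) ^ 2 := by
  obtain rfl | hg := Nat.eq_zero_or_pos g
  · simp
  have hC2' : ∀ i, 1 ≤ i → i + 1 ≤ g - 1 →
      a i * u (i + 1) * u i = u (i + 1) * u i * a (i + 1) := fun i h1 h2 => hC2 i h1 (by omega)
  have h : Relations (g - 1) a u :=
    ⟨.self_of_lt hu1, hu2, hC1, hC2', fun i h1 h2 => (hC3 i h1 (by omega)).symm, hC4, hC5⟩
  have hV : prodDesc u (g - 1) = (prodAsc u (g - 1))⁻¹ := eq_inv_of_mul_eq_one_left hB4a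
  have hVpow : prodDesc u (g - 1) ^ (g - 1) = prodAsc u (g - 1) := by
    rw [hV, inv_pow]
    exact inv_eq_of_mul_eq_one_right (by rw [pow_sub_one_mul hg.ne', hB3])
  have hcomm : Commute (prodAsc a (g - 1)) (prodDesc u (g - 1)) :=
    commute_prodAsc_prodDesc (.self_of_lt ha1) ha2 hC1 hC2' hC4
      (by rwa [show g - 2 = g - 1 - 1 by omega] at hD)
  have hsq : prodAsc a (g - 1) ^ 2 = prodAsc u (g - 1) ^ 2 := by
    calc prodAsc a (g - 1) ^ 2 = (prodDesc u (g - 1))⁻¹ *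
          (prodAsc a (g - 1) * prodDesc u (g - 1) * prodAsc a (g - 1)) := by
          rw [hcomm.eq, sq]; group
      _ = prodAsc u (g - 1) ^ 2 := by
          rw [h.prodAsc_mul_prodDesc_mul_prodAsc le_rfl, hVpow, hV, inv_inv, sq]
  exact ⟨by rw [hsq, hV, inv_pow, inv_inv], hsq⟩
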